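/- arXiv:0705.4124 — 3 statements merged into one kernel-verified Lean document; each statement's English description precedes it below -/
import Mathlib

section
/- If a measure μ linearly majorizes a measure ν on the sphere S^{N-1}, then ∫ p dμ ≥ ∫ p dν for every sublinear (positively homogeneous, subadditive, continuous) function p on ℝ^N restricted to S^{N-1} (Reshetnyak's theorem, sufficiency direction). -/
/-!
Every point `z` of the sphere carries, by Hahn–Banach, a linear functional `⟪a, ·⟫ ≤ p` with
equality at `z`; by continuity it stays `ε`-close to `p` near `z`. Compactness yields a finite Borel
partition `U_k` of the sphere and functionals `a_k` with `p - ε ≤ ⟪a_k, ·⟫ ≤ p` on `U_k`. If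
`μ = ∑ μ_k` is the decomposition given by linear majorization for this partition, then
`∫ p dν - ε ν(S) ≤ ∑ ∫_{U_k} ⟪a_k, ·⟫ dν = ∑ ∫ ⟪a_k, ·⟫ dμ_k ≤ ∑ ∫ p dμ_k = ∫ p dμ`.
-/

open MeasureTheory

/-- The unit sphere in `ℝ^N`. -/
abbrev Sph (N : ℕ) := Metric.sphere (0 : EuclideanSpace ℝ (Fin N)) 1

/-- `μ` linearly majorizes `ν` (Reshetnyak): for every finite Borel partition of the sphere
there is a decomposition of `μ` whose pieces match `ν` on restrictions of linear functionals. -/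
def LinMaj {N : ℕ} (μ ν : Measure (Sph N)) : Prop :=
  ∀ (m : ℕ) (U : Fin m → Set (Sph N)),
    (∀ k, MeasurableSet (U k)) → Pairwise (Function.onFun Disjoint U) →
    (⋃ k, U k) = Set.univ →
    ∃ μs : Fin m → Measure (Sph N), (∑ k, μs k) = μ ∧
      ∀ k (a : EuclideanSpace ℝ (Fin N)),
        ∫ z, (inner ℝ a (z : EuclideanSpace ℝ (Fin N)) : ℝ) ∂(μs k) =
        ∫ z in U k, (inner ℝ a (z : EuclideanSpace ℝ (Fin N)) : ℝ) ∂ν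

open Set

theorem exists_supporting_linearMap {E : Type*} [AddCommGroup E] [Module ℝ E] {p : E → ℝ}
    (hph : ∀ c : ℝ, 0 < c → ∀ x, p (c • x) = c * p x)
    (hps : ∀ x y, p (x + y) ≤ p x + p y) {x₀ : E} (hx₀ : x₀ ≠ 0) :
    ∃ g : E →ₗ[ℝ] ℝ, (∀ x, g x ≤ p x) ∧ g x₀ = p x₀ := by
  have hp0 : p 0 = 0 := by grind [hph 2 two_pos 0, smul_zero]
  have hsymm : 0 ≤ p x₀ + p (-x₀) := by simpa [hp0] using hps x₀ (-x₀)
  set f : E →ₗ.[ℝ] ℝ := LinearPMap.mkSpanSingleton x₀ (p x₀) hx₀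
  have hf : ∀ x : f.domain, f x ≤ p x := by
    rintro ⟨x, hx⟩
    obtain ⟨c, rfl⟩ := Submodule.mem_span_singleton.mp hx
    rw [LinearPMap.mkSpanSingleton'_apply, RingHom.id_apply, smul_eq_mul]
    change c * p x₀ ≤ p (c • x₀)
    rcases le_or_gt 0 c with hc | hc
    · rcases hc.eq_or_lt with rfl | hc
      · simp [hp0]
      · rw [hph c hc]
    · have : p (c • x₀) = -c * p (-x₀) := by rw [← hph (-c) (by linarith), neg_smul_neg]
      nlinarith
  obtain ⟨g, hgf, hgp⟩ := exists_extension_of_le_sublinear f p hph hps hf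
  refine ⟨g, hgp, ?_⟩
  rw [hgf ⟨x₀, Submodule.mem_span_singleton_self x₀⟩]
  exact LinearPMap.mkSpanSingleton_apply ℝ ℝ hx₀ (p x₀)

theorem exists_supporting_inner {E : Type*} [NormedAddCommGroup E] [InnerProductSpace ℝ E]
    [FiniteDimensional ℝ E] {p : E → ℝ} (hph : ∀ c : ℝ, 0 < c → ∀ x, p (c • x) = c * p x)
    (hps : ∀ x y, p (x + y) ≤ p x + p y) {x₀ : E} (hx₀ : x₀ ≠ 0) :
    ∃ a : E, (∀ x, inner ℝ a x ≤ p x) ∧ inner ℝ a x₀ = p x₀ := by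
  obtain ⟨g, hgp, hgx₀⟩ := exists_supporting_linearMap hph hps hx₀
  refine ⟨(InnerProductSpace.toDual ℝ E).symm (LinearMap.toContinuousLinearMap g), ?_, ?_⟩
  · simpa [InnerProductSpace.toDual_symm_apply] using hgp
  · simpa [InnerProductSpace.toDual_symm_apply] using hgx₀

theorem exists_measurable_partition_subordinate {X : Type*} [TopologicalSpace X] [CompactSpace X]
    [MeasurableSpace X] [OpensMeasurableSpace X] (W : X → Set X) (hW : ∀ x, IsOpen (W x))
    (hmem : ∀ x, x ∈ W x) :
    ∃ (m : ℕ) (c : Fin m → X) (U : Fin m → Set X), (∀ k, MeasurableSet (U k)) ∧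
      Pairwise (Function.onFun Disjoint U) ∧ (⋃ k, U k) = univ ∧ ∀ k, U k ⊆ W (c k) := by
  obtain ⟨t, ht⟩ := CompactSpace.elim_nhds_subcover W fun x => (hW x).mem_nhds (hmem x)
  set c : Fin t.card → X := fun k => t.equivFin.symm k
  have hcover : (⋃ k, W (c k)) = univ := by
    refine eq_univ_of_forall fun z => ?_
    obtain ⟨x, hx, hzx⟩ := mem_iUnion₂.mp (ht ▸ mem_univ z : z ∈ ⋃ x ∈ t, W x)
    exact mem_iUnion.mpr ⟨t.equivFin ⟨x, hx⟩, by simpa [c] using hzx⟩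
  refine ⟨t.card, c, disjointed (W ∘ c), fun k => ?_, disjoint_disjointed _,
    iUnion_disjointed.trans hcover, disjointed_subset _⟩
  rw [disjointed_eq_inter_compl]
  exact (hW _).measurableSet.inter <|
    MeasurableSet.iInter fun j => MeasurableSet.iInter fun _ => (hW _).measurableSet.compl

theorem Continuous.integrable_of_compactSpace {X : Type*} [TopologicalSpace X] [CompactSpace X]
    [MeasurableSpace X] [OpensMeasurableSpace X] {F : Type*} [NormedAddCommGroup F]
    {ν : Measure X} [IsFiniteMeasure ν] {f : X → F} (hf : Continuous f) : Integrable f ν :=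
  hf.integrable_of_hasCompactSupport (HasCompactSupport.of_compactSpace f)

theorem LinMaj.integral_sub_le {N : ℕ} {μ ν : Measure (Sph N)} [IsFiniteMeasure μ]
    [IsFiniteMeasure ν] (h : LinMaj μ ν) {f : Sph N → ℝ} (hf : Continuous f) {m : ℕ}
    {U : Fin m → Set (Sph N)} (hU : ∀ k, MeasurableSet (U k))
    (hUd : Pairwise (Function.onFun Disjoint U)) (hUc : (⋃ k, U k) = univ)
    (a : Fin m → EuclideanSpace ℝ (Fin N)) {ε : ℝ}
    (hle : ∀ k (z : Sph N), inner ℝ (a k) (z : EuclideanSpace ℝ (Fin N)) ≤ f z)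
    (hge : ∀ k, ∀ z ∈ U k, f z - ε ≤ inner ℝ (a k) (z : EuclideanSpace ℝ (Fin N))) :
    ∫ z, f z ∂ν - ε * ν.real univ ≤ ∫ z, f z ∂μ := by
  obtain ⟨μs, hμs, hμsν⟩ := h m U hU hUd hUc
  have hinner : ∀ k, Continuous fun z : Sph N => inner ℝ (a k) (z : EuclideanSpace ℝ (Fin N)) :=
    fun k => continuous_const.inner continuous_subtype_val
  have hμsk : ∀ {g : Sph N → ℝ}, Continuous g → ∀ k, Integrable g (μs k) := fun hg k =>
    hg.integrable_of_compactSpace.mono_measure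
      (hμs ▸ Finset.single_le_sum (fun i _ => Measure.zero_le (μs i)) (Finset.mem_univ k))
  have hfε : Continuous fun z => f z - ε := hf.sub continuous_const
  calc ∫ z, f z ∂ν - ε * ν.real univ
      = ∑ k, ∫ z in U k, (f z - ε) ∂ν := by
        rw [← integral_iUnion_fintype hU hUd fun k => hfε.integrable_of_compactSpace.integrableOn,
          hUc, setIntegral_univ, integral_sub hf.integrable_of_compactSpace (integrable_const ε),
          integral_const, smul_eq_mul, mul_comm]
    _ ≤ ∑ k, ∫ z in U k, inner ℝ (a k) (z : EuclideanSpace ℝ (Fin N)) ∂ν :=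
        Finset.sum_le_sum fun k _ => setIntegral_mono_on
          hfε.integrable_of_compactSpace.integrableOn
          (hinner k).integrable_of_compactSpace.integrableOn (hU k) (hge k)
    _ = ∑ k, ∫ z, inner ℝ (a k) (z : EuclideanSpace ℝ (Fin N)) ∂(μs k) :=
        Finset.sum_congr rfl fun k _ => (hμsν k (a k)).symm
    _ ≤ ∑ k, ∫ z, f z ∂(μs k) :=
        Finset.sum_le_sum fun k _ => integral_mono (hμsk (hinner k) k) (hμsk hf k) (hle k)
    _ = ∫ z, f z ∂μ := by
        rw [← hμs, integral_finsetSum_measure fun k _ => hμsk hf k]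

theorem exists_partition_supporting_inner {N : ℕ} {p : EuclideanSpace ℝ (Fin N) → ℝ}
    (hpc : Continuous p) (hph : ∀ c : ℝ, 0 < c → ∀ x, p (c • x) = c * p x)
    (hps : ∀ x y, p (x + y) ≤ p x + p y) {ε : ℝ} (hε : 0 < ε) :
    ∃ (m : ℕ) (U : Fin m → Set (Sph N)) (a : Fin m → EuclideanSpace ℝ (Fin N)),
      (∀ k, MeasurableSet (U k)) ∧ Pairwise (Function.onFun Disjoint U) ∧ (⋃ k, U k) = univ ∧
      (∀ k x, inner ℝ (a k) x ≤ p x) ∧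
      ∀ k, ∀ z ∈ U k, p z - ε ≤ inner ℝ (a k) (z : EuclideanSpace ℝ (Fin N)) := by
  have hne : ∀ s : Sph N, (s : EuclideanSpace ℝ (Fin N)) ≠ 0 := fun s =>
    ne_zero_of_mem_unit_sphere s
  choose b hbp hbs using fun s : Sph N => exists_supporting_inner hph hps (hne s)
  set W : Sph N → Set (Sph N) := fun s =>
    {z | p z - inner ℝ (b s) (z : EuclideanSpace ℝ (Fin N)) < ε}
  have hW : ∀ s, IsOpen (W s) := fun s =>
    isOpen_lt ((hpc.comp continuous_subtype_val).sub
      (continuous_const.inner continuous_subtype_val)) continuous_const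
  obtain ⟨m, c, U, hU, hUd, hUc, hUW⟩ :=
    exists_measurable_partition_subordinate W hW fun s => by simpa [W, hbs s] using hε
  refine ⟨m, U, fun k => b (c k), hU, hUd, hUc, fun k => hbp (c k), fun k z hz => ?_⟩
  have : p z - inner ℝ (b (c k)) (z : EuclideanSpace ℝ (Fin N)) < ε := hUW k hz
  linarith

theorem reshetnyak_sufficiency {N : ℕ} (μ ν : Measure (Sph N))
    [IsFiniteMeasure μ] [IsFiniteMeasure ν] (h : LinMaj μ ν)
    (p : EuclideanSpace ℝ (Fin N) → ℝ) (hpc : Continuous p)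
    (hph : ∀ c : ℝ, 0 ≤ c → ∀ x, p (c • x) = c * p x)
    (hps : ∀ x y, p (x + y) ≤ p x + p y) :
    ∫ z, p (z : EuclideanSpace ℝ (Fin N)) ∂ν ≤ ∫ z, p (z : EuclideanSpace ℝ (Fin N)) ∂μ := by
  refine le_of_forall_pos_le_add fun ε hε => ?_
  set C := ν.real univ
  have hδ : 0 < ε / (C + 1) := by positivity
  obtain ⟨m, U, a, hU, hUd, hUc, hle, hge⟩ :=
    exists_partition_supporting_inner hpc (fun c hc => hph c hc.le) hps hδ
  have hmain := h.integral_sub_le (f := fun z => p z) (hpc.comp continuous_subtype_val)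
    hU hUd hUc a (fun k z => hle k z) hge
  have hδC : ε / (C + 1) * C ≤ ε := by
    rw [div_mul_eq_mul_div, div_le_iff₀ (by positivity)]
    nlinarith
  linarith
end

section
/- If a measure μ affinely majorizes a measure ν on a compact convex subset Q of a locally convex space, then ∫_Q f dμ ≥ ∫_Q f dν for every continuous convex function f on Q (Cartier–Fell–Meyer theorem, sufficiency direction). -/
open MeasureTheory

/-- `μ` affinely majorizes `ν` (Loomis): for every finite decomposition of `ν` into positive
summands there is a matching decomposition of `μ` whose pieces agree with those of `ν`
against all continuous affine functions. -/
def AffMaj {X : Type*} [AddCommGroup X] [Module ℝ X] [TopologicalSpace X] [MeasurableSpace X]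
    (μ ν : Measure X) : Prop :=
  ∀ (m : ℕ) (νs : Fin m → Measure X), (∑ k, νs k) = ν →
    ∃ μs : Fin m → Measure X, (∑ k, μs k) = μ ∧
      ∀ k (a : X →L[ℝ] ℝ) (c : ℝ),
        ∫ x, (a x + c) ∂(μs k) = ∫ x, (a x + c) ∂(νs k)

open Set Filter Topology

/-!
A continuous convex function on a compact convex set is, up to `ε`, the maximum of finitely many
continuous affine minorants `g₁, …, gₘ`: each point lies strictly below the epigraph after lowering
by `ε`, so Hahn–Banach separation gives an affine minorant that is `ε`-close there, and compactness
makes finitely many of them suffice. Split `ν` according to which `gᵢ` realises the maximum and let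
`μ = μ₁ + ⋯ + μₘ` be the matching decomposition. Then
`∫ f dν ≤ ∑ ∫ (gᵢ + ε) dνᵢ = ∑ ∫ (gᵢ + ε) dμᵢ ≤ ∫ (f + ε) dμ`, and `ε` is arbitrary.
-/

section AffineMinorants

variable {X : Type*} [AddCommGroup X] [Module ℝ X] [TopologicalSpace X]
  [IsTopologicalAddGroup X] [ContinuousSMul ℝ X] [LocallyConvexSpace ℝ X] {s : Set X} {f : X → ℝ}

theorem ConvexOn.exists_affine_minorant_gt (hf : ConvexOn ℝ s f) {x₀ : X} (hx₀ : x₀ ∈ s)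
    (hcont : ContinuousWithinAt f s x₀) {δ : ℝ} (hδ : 0 < δ) :
    ∃ (a : X →L[ℝ] ℝ) (c : ℝ), (∀ y ∈ s, a y + c ≤ f y) ∧ f x₀ - δ < a x₀ + c := by
  set E : Set (X × ℝ) := {p | p.1 ∈ s ∧ f p.1 ≤ p.2}
  have hout : (x₀, f x₀ - δ) ∉ closure E := by
    rw [mem_closure_iff_frequently, not_frequently, nhds_prod_eq]
    have hfx : ∀ᶠ y in 𝓝[s] x₀, f x₀ - δ / 2 < f y := hcont (Ioi_mem_nhds (by linarith))
    have ht : ∀ᶠ t in 𝓝 (f x₀ - δ), t < f x₀ - δ / 2 := Iio_mem_nhds (by linarith)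
    filter_upwards [(eventually_nhdsWithin_iff.1 hfx).prod_mk ht]
      with ⟨y, t⟩ ⟨hy, ht⟩ ⟨hys, hft⟩
    linarith [hy hys]
  obtain ⟨φ, u, hφE, hφp⟩ :=
    geometric_hahn_banach_closed_point hf.convex_epigraph.closure isClosed_closure hout
  set a := φ.comp (ContinuousLinearMap.inl ℝ X ℝ)
  set r := φ (0, 1)
  have hφ : ∀ p : X × ℝ, φ p = a p.1 + p.2 * r := fun ⟨x, t⟩ => by
    change φ (x, t) = φ (x, 0) + t * φ (0, 1)
    rw [← smul_eq_mul, ← map_smul, ← map_add]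
    simp
  have hbelow : ∀ y ∈ s, a y + f y * r < u := fun y hy => by
    simpa [hφ] using hφE (y, f y) (subset_closure ⟨hy, le_rfl⟩)
  rw [hφ] at hφp
  have hr : r < 0 := by nlinarith [hbelow x₀ hx₀]
  have haffine : ∀ y, (-r⁻¹ • a) y + u / r = (u - a y) / r := fun y => by
    simp only [FunLike.coe_smul, Pi.smul_apply, smul_eq_mul]
    field_simp
    ring
  refine ⟨-r⁻¹ • a, u / r, fun y hy => ?_, ?_⟩
  · rw [haffine, div_le_iff_of_neg hr]
    linarith [hbelow y hy]
  · rw [haffine, lt_div_iff_of_neg hr]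
    linarith

theorem ConvexOn.exists_fin_affine_minorants (hs : IsCompact s) (hf : ConvexOn ℝ s f)
    (hfc : ContinuousOn f s) {ε : ℝ} (hε : 0 < ε) :
    ∃ (m : ℕ) (a : Fin m → X →L[ℝ] ℝ) (c : Fin m → ℝ),
      (∀ i, ∀ y ∈ s, a i y + c i ≤ f y) ∧ ∀ y ∈ s, ∃ i, f y < a i y + c i + ε := by
  choose a c hle hgt using fun x : s => hf.exists_affine_minorant_gt x.2 (hfc x x.2) hε
  have hnhds : ∀ x (hx : x ∈ s), {y | f y < a ⟨x, hx⟩ y + c ⟨x, hx⟩ + ε} ∈ 𝓝[s] x :=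
    fun x hx => (hfc x hx).eventually_lt
      (by fun_prop : Continuous fun y => a ⟨x, hx⟩ y + c ⟨x, hx⟩ + ε).continuousWithinAt
      (by linarith [hgt ⟨x, hx⟩])
  obtain ⟨t, ht⟩ := hs.elim_nhdsWithin_subcover' _ hnhds
  refine ⟨t.card, fun i => a (t.equivFin.symm i), fun i => c (t.equivFin.symm i),
    fun i => hle _, fun y hy => ?_⟩
  obtain ⟨x, hxt, hyx⟩ := mem_iUnion₂.1 (ht hy)
  exact ⟨t.equivFin ⟨x, hxt⟩, by simpa using hyx⟩

end AffineMinorants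

section Measures

variable {X : Type*} [MeasurableSpace X]

theorem ContinuousOn.integrable_of_isCompact_of_ae_mem [TopologicalSpace X]
    [OpensMeasurableSpace X] {μ : Measure X} [IsFiniteMeasure μ] {K : Set X} {g : X → ℝ}
    (hg : ContinuousOn g K) (hK : IsCompact K) (hμK : ∀ᵐ x ∂μ, x ∈ K) : Integrable g μ := by
  -- `K` need not be measurable (`X` is not assumed Hausdorff); work on a measurable subset instead
  obtain ⟨N, hKN, hNm, hN⟩ := exists_measurable_superset_of_null (mem_ae_iff.1 hμK)
  have hμN : μ.restrict Nᶜ = μ :=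
    Measure.restrict_eq_self_of_ae_mem (compl_mem_ae_iff.2 hN)
  obtain ⟨C, hC⟩ := hK.exists_bound_of_continuousOn hg
  refine Integrable.of_bound ?_ C (hμK.mono hC)
  rw [← hμN]
  exact hg.aestronglyMeasurable_of_subset_isCompact hK hNm.compl (compl_subset_comm.1 hKN)

theorem MeasureTheory.Measure.exists_sum_eq_of_ae_cover {ι : Type*} [Fintype ι] [LinearOrder ι]
    [LocallyFiniteOrderBot ι] {ν : Measure X} {S : ι → Set X} (hS : ∀ i, MeasurableSet (S i))
    (hcover : ∀ᵐ x ∂ν, ∃ i, x ∈ S i) :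
    ∃ νs : ι → Measure X, ∑ i, νs i = ν ∧ (∀ i, νs i ≤ ν) ∧ ∀ i, ∀ᵐ x ∂νs i, x ∈ S i := by
  have hmeas : ∀ i, MeasurableSet (disjointed S i) :=
    fun i => disjointedRec (fun _ j ht => ht.diff (hS j)) (hS i)
  refine ⟨fun i => ν.restrict (disjointed S i), ?_, fun i => Measure.restrict_le_self, fun i => ?_⟩
  · rw [← Measure.sum_fintype, ← Measure.restrict_iUnion (disjoint_disjointed S) hmeas,
      iUnion_disjointed]
    exact Measure.restrict_eq_self_of_ae_mem (by simpa only [mem_iUnion] using hcover)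
  · exact (ae_restrict_mem (hmeas i)).mono fun x hx => disjointed_subset S i hx

end Measures

theorem AffMaj.integral_le_add_of_affine_approx {X : Type*} [AddCommGroup X] [Module ℝ X]
    [TopologicalSpace X] [MeasurableSpace X] [OpensMeasurableSpace X] {μ ν : Measure X}
    [IsFiniteMeasure μ] [IsFiniteMeasure ν] (h : AffMaj μ ν) {Q : Set X} (hQ : IsCompact Q)
    (hμQ : ∀ᵐ x ∂μ, x ∈ Q) (hνQ : ∀ᵐ x ∂ν, x ∈ Q) {f : X → ℝ} (hf : ContinuousOn f Q)
    {m : ℕ} {a : Fin m → X →L[ℝ] ℝ} {c : Fin m → ℝ} {ε : ℝ}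
    (hle : ∀ i, ∀ y ∈ Q, a i y + c i ≤ f y) (hgt : ∀ y ∈ Q, ∃ i, f y < a i y + c i + ε) :
    ∫ x, f x ∂ν ≤ ∫ x, f x ∂μ + ε * μ.real univ := by
  have hcont : ∀ i (d : ℝ), Continuous fun x => a i x + d :=
    fun i d => (a i).continuous.add continuous_const
  set S : Fin m → Set X := fun i => {y | ∀ j, a j y + c j ≤ a i y + c i}
  have hS : ∀ i, MeasurableSet (S i) := fun i => by
    simp only [S, ofPred_forall]
    exact (isClosed_iInter fun j => isClosed_le (hcont j (c j)) (hcont i (c i))).measurableSet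
  have hcover : ∀ᵐ y ∂ν, ∃ i, y ∈ S i := hνQ.mono fun y hy => by
    obtain ⟨i₀, -⟩ := hgt y hy
    obtain ⟨i, -, hi⟩ :=
      Finset.univ.exists_max_image (fun i => a i y + c i) ⟨i₀, Finset.mem_univ _⟩
    exact ⟨i, fun j => hi j (Finset.mem_univ j)⟩
  obtain ⟨νs, hνsum, hνle, hνS⟩ := Measure.exists_sum_eq_of_ae_cover hS hcover
  obtain ⟨μs, hμsum, haff⟩ := h m νs hνsum
  have hμle : ∀ i, μs i ≤ μ := fun i =>
    hμsum ▸ Finset.single_le_sum (fun j _ => bot_le) (Finset.mem_univ i)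
  have hfμ : Integrable f μ := hf.integrable_of_isCompact_of_ae_mem hQ hμQ
  have hfν : Integrable f ν := hf.integrable_of_isCompact_of_ae_mem hQ hνQ
  have hfεμ : Integrable (fun x => f x + ε) μ := hfμ.add (integrable_const ε)
  have hgμ : ∀ i d, Integrable (fun x => a i x + d) μ := fun i d =>
    (hcont i d).continuousOn.integrable_of_isCompact_of_ae_mem hQ hμQ
  have hgν : ∀ i d, Integrable (fun x => a i x + d) ν := fun i d =>
    (hcont i d).continuousOn.integrable_of_isCompact_of_ae_mem hQ hνQ
  have hpiece : ∀ i, ∫ x, f x ∂νs i ≤ ∫ x, f x + ε ∂μs i := fun i => calc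
    ∫ x, f x ∂νs i ≤ ∫ x, a i x + (c i + ε) ∂νs i := by
      refine integral_mono_ae (hfν.mono_measure (hνle i)) ((hgν i _).mono_measure (hνle i)) ?_
      filter_upwards [hνS i, ae_mono (hνle i) hνQ] with y hyS hyQ
      obtain ⟨j, hj⟩ := hgt y hyQ
      linarith [hyS j]
    _ = ∫ x, a i x + (c i + ε) ∂μs i := (haff i (a i) (c i + ε)).symm
    _ ≤ ∫ x, f x + ε ∂μs i := by
      refine integral_mono_ae ((hgμ i _).mono_measure (hμle i)) (hfεμ.mono_measure (hμle i)) ?_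
      filter_upwards [ae_mono (hμle i) hμQ] with y hy
      linarith [hle i y hy]
  calc ∫ x, f x ∂ν = ∑ i, ∫ x, f x ∂νs i := by
        rw [← hνsum]
        exact integral_finsetSum_measure fun i _ => hfν.mono_measure (hνle i)
    _ ≤ ∑ i, ∫ x, f x + ε ∂μs i := Finset.sum_le_sum fun i _ => hpiece i
    _ = ∫ x, f x + ε ∂μ := by
        rw [← hμsum]
        exact (integral_finsetSum_measure fun i _ => hfεμ.mono_measure (hμle i)).symm
    _ = ∫ x, f x ∂μ + ε * μ.real univ := by
        rw [integral_add hfμ (integrable_const ε), integral_const, smul_eq_mul, mul_comm]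

theorem cartier_fell_meyer_sufficiency_general {X : Type*} [AddCommGroup X] [Module ℝ X]
    [TopologicalSpace X] [IsTopologicalAddGroup X] [ContinuousSMul ℝ X]
    [LocallyConvexSpace ℝ X] [MeasurableSpace X] [BorelSpace X]
    (Q : Set X) (hQcp : IsCompact Q)
    (μ ν : Measure X) [IsFiniteMeasure μ] [IsFiniteMeasure ν]
    (hμQ : μ Qᶜ = 0) (hνQ : ν Qᶜ = 0)
    (h : AffMaj μ ν)
    (f : X → ℝ) (hfc : ContinuousOn f Q) (hfcv : ConvexOn ℝ Q f) :
    ∫ x, f x ∂ν ≤ ∫ x, f x ∂μ := by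
  refine le_of_forall_pos_le_add fun δ hδ => ?_
  set C := μ.real univ
  have hC : 0 ≤ C := measureReal_nonneg
  obtain ⟨m, a, c, hle, hgt⟩ := hfcv.exists_fin_affine_minorants hQcp hfc
    (div_pos hδ (by linarith : 0 < C + 1))
  have hsmall : δ / (C + 1) * C ≤ δ := by
    rw [div_mul_eq_mul_div, div_le_iff₀ (by linarith)]
    nlinarith
  have key := h.integral_le_add_of_affine_approx hQcp (mem_ae_iff.2 hμQ) (mem_ae_iff.2 hνQ) hfc
    hle hgt
  linarith

theorem cartier_fell_meyer_sufficiency {X : Type*} [AddCommGroup X] [Module ℝ X]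
    [TopologicalSpace X] [IsTopologicalAddGroup X] [ContinuousSMul ℝ X]
    [LocallyConvexSpace ℝ X] [MeasurableSpace X] [BorelSpace X]
    (Q : Set X) (hQcp : IsCompact Q) (hQcv : Convex ℝ Q)
    (μ ν : Measure X) [IsFiniteMeasure μ] [IsFiniteMeasure ν]
    (hμQ : μ Qᶜ = 0) (hνQ : ν Qᶜ = 0)
    (h : AffMaj μ ν)
    (f : X → ℝ) (hfc : ContinuousOn f Q) (hfcv : ConvexOn ℝ Q f) :
    ∫ x, f x ∂ν ≤ ∫ x, f x ∂μ :=
  cartier_fell_meyer_sufficiency_general Q hQcp μ ν hμQ hνQ h f hfc hfcv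
end

section
/- In the 'if' direction of the decomposition theorem: if for every decomposition g = g_1 + … + g_N into positive linear functionals there exists a decomposition f = f_1 + … + f_N into positive linear functionals with f_k(h_k) ≥ g_k(h_k) for all h_k in cones H_k, then f(h_1 ∨ … ∨ h_N) ≥ g(h_1 ∨ … ∨ h_N) for all h_k ∈ H_k, using the Riesz decomposition property applied to g evaluated at the supremum. -/
/-!
Put `t = h₁ ⊔ ⋯ ⊔ h_N`; the elements `t - h_k` are positive with infimum `0`. Splitting `g`
successively along band components (the part of `g` in the band generated by `r ≥ 0` is
`x ↦ sup_{c ≥ 0} g (x ⊓ c • r)` on the positive cone, extended linearly through `x = x⁺ - x⁻`)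
gives `g = ∑ g_k` with positive `g_k` and `g_k (t - h_k) = 0`. The hypothesis supplies
`f = ∑ f_k` with `g_k ≤ f_k` on `H_k`, hence
`g t = ∑ g_k (h_k) ≤ ∑ f_k (h_k) ≤ ∑ f_k t = f t`.
-/

open Finset NNReal

section LatticeOrderedModule

variable {X : Type*} [AddCommGroup X] [Lattice X] [AddLeftMono X]

lemma add_inf_le_inf_add_inf {a b c : X} (ha : 0 ≤ a) (hb : 0 ≤ b) (hc : 0 ≤ c) :
    (a + b) ⊓ c ≤ a ⊓ c + b ⊓ c := by
  rw [add_inf, inf_add, inf_add]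
  refine le_inf (le_inf inf_le_left ?_) (le_inf ?_ ?_) <;> refine inf_le_right.trans ?_
  · exact le_add_of_nonneg_right hb
  · exact le_add_of_nonneg_left ha
  · exact le_add_of_nonneg_right hc

variable [Module ℝ X]

lemma LinearMap.map_le_map_of_nonneg {g : X →ₗ[ℝ] ℝ}
    (hg : ∀ x, 0 ≤ x → 0 ≤ g x) {x y : X} (hxy : x ≤ y) : g x ≤ g y := by
  simpa using hg (y - x) (sub_nonneg.2 hxy)

end LatticeOrderedModule

lemma smul_inf_of_pos {X : Type*} [AddCommGroup X] [Lattice X] [Module ℝ X] [PosSMulMono ℝ X]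
    {c : ℝ} (hc : 0 < c) (u v : X) : c • (u ⊓ v) = c • u ⊓ c • v :=
  (OrderIso.smulRight hc).map_inf u v

section ConeExtension

variable {X : Type*} [AddCommGroup X] [Lattice X] [AddLeftMono X] {φ : X → ℝ}
  (hadd : ∀ x y, 0 ≤ x → 0 ≤ y → φ (x + y) = φ x + φ y)

def coneExtension (φ : X → ℝ) (x : X) : ℝ := φ x⁺ - φ x⁻

include hadd

lemma coneExtension_eq_sub {a b x : X} (ha : 0 ≤ a) (hb : 0 ≤ b) (h : a - b = x) :
    coneExtension φ x = φ a - φ b := by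
  have hsum : x⁺ + b = a + x⁻ := by
    rw [← sub_eq_sub_iff_add_eq_add, posPart_sub_negPart, h]
  have := hadd _ _ (posPart_nonneg x) hb
  rw [hsum, hadd _ _ ha (negPart_nonneg x)] at this
  rw [coneExtension]
  linarith

lemma coneExtension_of_nonneg {x : X} (hx : 0 ≤ x) : coneExtension φ x = φ x := by
  have h0 : φ 0 = 0 := by simpa using hadd 0 0 le_rfl le_rfl
  rw [coneExtension_eq_sub hadd hx le_rfl (sub_zero x), h0, sub_zero]

lemma coneExtension_add (x y : X) :
    coneExtension φ (x + y) = coneExtension φ x + coneExtension φ y := by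
  rw [coneExtension_eq_sub hadd (a := x⁺ + y⁺) (b := x⁻ + y⁻)
      (add_nonneg (posPart_nonneg _) (posPart_nonneg _))
      (add_nonneg (negPart_nonneg _) (negPart_nonneg _))
      (by rw [add_sub_add_comm, posPart_sub_negPart, posPart_sub_negPart]),
    hadd _ _ (posPart_nonneg _) (posPart_nonneg _), hadd _ _ (negPart_nonneg _) (negPart_nonneg _),
    coneExtension, coneExtension]
  ring

variable [Module ℝ X] [PosSMulMono ℝ X]

lemma coneExtension_smul (hsmul : ∀ (c : ℝ) x, 0 ≤ c → 0 ≤ x → φ (c • x) = c * φ x)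
    (c : ℝ) (x : X) : coneExtension φ (c • x) = c * coneExtension φ x := by
  rcases le_or_gt 0 c with hc | hc
  · rw [coneExtension_eq_sub hadd (smul_nonneg hc (posPart_nonneg x))
        (smul_nonneg hc (negPart_nonneg x)) (by rw [← smul_sub, posPart_sub_negPart]),
      hsmul c _ hc (posPart_nonneg _), hsmul c _ hc (negPart_nonneg _), coneExtension]
    ring
  · have hc' : 0 ≤ -c := by linarith
    rw [coneExtension_eq_sub hadd (smul_nonneg hc' (negPart_nonneg x))
        (smul_nonneg hc' (posPart_nonneg x))
        (by rw [← smul_sub, neg_smul, ← smul_neg, neg_sub, posPart_sub_negPart]),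
      hsmul _ _ hc' (posPart_nonneg _), hsmul _ _ hc' (negPart_nonneg _), coneExtension]
    ring

theorem exists_linearMap_eq_on_nonneg
    (hsmul : ∀ (c : ℝ) x, 0 ≤ c → 0 ≤ x → φ (c • x) = c * φ x) :
    ∃ L : X →ₗ[ℝ] ℝ, ∀ x, 0 ≤ x → L x = φ x :=
  ⟨{ toFun := coneExtension φ
     map_add' := coneExtension_add hadd
     map_smul' := coneExtension_smul hadd hsmul },
    fun _ hx ↦ coneExtension_of_nonneg hadd hx⟩

end ConeExtension

section BandComponent

variable {X : Type*} [AddCommGroup X] [Lattice X] [Module ℝ X] {g : X →ₗ[ℝ] ℝ} {r : X}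

noncomputable def bandPart (g : X →ₗ[ℝ] ℝ) (r x : X) : ℝ := ⨆ c : ℝ≥0, g (x ⊓ (c : ℝ) • r)

lemma bandPart_smul [PosSMulMono ℝ X] (hr : 0 ≤ r) {c : ℝ} (hc : 0 ≤ c) (x : X) :
    bandPart g r (c • x) = c * bandPart g r x := by
  lift c to ℝ≥0 using hc
  rcases eq_or_ne c 0 with rfl | hc
  · simp [bandPart, inf_eq_left.2 (smul_nonneg _ hr)]
  have hc' : (0 : ℝ) < c := by positivity
  have hterm (a : ℝ≥0) :
      g ((c : ℝ) • x ⊓ ((c * a : ℝ≥0) : ℝ) • r) = c * g (x ⊓ (a : ℝ) • r) := by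
    rw [NNReal.coe_mul, mul_smul, ← smul_inf_of_pos hc', map_smul, smul_eq_mul]
  rw [bandPart, bandPart, Real.mul_iSup_of_nonneg c.coe_nonneg, ← funext hterm]
  exact (Function.Surjective.iSup_comp (fun a ↦ ⟨a / c, by field_simp⟩) _).symm

variable [AddLeftMono X] (hg : ∀ x, 0 ≤ x → 0 ≤ g x)
include hg

lemma bandPart_le (x : X) : bandPart g r x ≤ g x :=
  ciSup_le fun _ ↦ g.map_le_map_of_nonneg hg inf_le_left

lemma le_bandPart (x : X) (c : ℝ≥0) : g (x ⊓ (c : ℝ) • r) ≤ bandPart g r x :=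
  le_ciSup (f := fun c : ℝ≥0 ↦ g (x ⊓ (c : ℝ) • r))
    ⟨g x, Set.forall_mem_range.2 fun _ ↦ g.map_le_map_of_nonneg hg inf_le_left⟩ c

lemma bandPart_nonneg {x : X} (hx : 0 ≤ x) : 0 ≤ bandPart g r x := by
  simpa [inf_eq_right.2 hx] using le_bandPart hg (r := r) x 0

lemma bandPart_self : bandPart g r r = g r :=
  le_antisymm (bandPart_le hg r) (by simpa using le_bandPart hg (r := r) r 1)

variable [PosSMulMono ℝ X] (hr : 0 ≤ r)
include hr

lemma bandPart_add {x y : X} (hx : 0 ≤ x) (hy : 0 ≤ y) :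
    bandPart g r (x + y) = bandPart g r x + bandPart g r y := by
  refine le_antisymm (ciSup_le fun c ↦ ?_) (ciSup_add_ciSup_le fun a b ↦ ?_)
  · calc g ((x + y) ⊓ (c : ℝ) • r) ≤ g (x ⊓ (c : ℝ) • r + y ⊓ (c : ℝ) • r) :=
          g.map_le_map_of_nonneg hg (add_inf_le_inf_add_inf hx hy (smul_nonneg c.2 hr))
      _ ≤ bandPart g r x + bandPart g r y := by
          rw [map_add]; exact add_le_add (le_bandPart hg x c) (le_bandPart hg y c)
  · calc g (x ⊓ (a : ℝ) • r) + g (y ⊓ (b : ℝ) • r) = g (x ⊓ (a : ℝ) • r + y ⊓ (b : ℝ) • r) :=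
          (map_add g _ _).symm
      _ ≤ g ((x + y) ⊓ ((a + b : ℝ≥0) : ℝ) • r) := by
          refine g.map_le_map_of_nonneg hg (le_inf (add_le_add inf_le_left inf_le_left) ?_)
          rw [NNReal.coe_add, add_smul]
          exact add_le_add inf_le_right inf_le_right
      _ ≤ bandPart g r (x + y) := le_bandPart hg _ _

lemma bandPart_eq_zero {s : X} (hs : 0 ≤ s) (h : g (s ⊓ r) = 0) : bandPart g r s = 0 := by
  refine le_antisymm (ciSup_le fun c ↦ ?_) (bandPart_nonneg hg hs)
  have hle : s ⊓ (c : ℝ) • r ≤ (1 + (c : ℝ)) • (s ⊓ r) := by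
    rw [smul_inf_of_pos (by positivity), add_smul, add_smul, one_smul, one_smul]
    exact inf_le_inf (le_add_of_nonneg_right (smul_nonneg c.2 hs)) (le_add_of_nonneg_left hr)
  simpa [h] using g.map_le_map_of_nonneg hg hle

theorem exists_bandComponent : ∃ G : X →ₗ[ℝ] ℝ, (∀ x, 0 ≤ x → 0 ≤ G x) ∧
    (∀ x, 0 ≤ x → G x ≤ g x) ∧ G r = g r ∧ ∀ s, 0 ≤ s → g (s ⊓ r) = 0 → G s = 0 := by
  obtain ⟨G, hG⟩ := exists_linearMap_eq_on_nonneg (fun _ _ ↦ bandPart_add hg hr)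
    (fun _ x hc _ ↦ bandPart_smul hr hc x)
  refine ⟨G, fun x hx ↦ ?_, fun x hx ↦ ?_, ?_, fun s hs h ↦ ?_⟩
  · rw [hG x hx]; exact bandPart_nonneg hg hx
  · rw [hG x hx]; exact bandPart_le hg x
  · rw [hG r hr]; exact bandPart_self hg
  · rw [hG s hs]; exact bandPart_eq_zero hg hr hs h

end BandComponent

theorem exists_decomposition_of_map_inf'_eq_zero {X : Type*} [AddCommGroup X] [Lattice X]
    [AddLeftMono X] [Module ℝ X] [PosSMulMono ℝ X] {ι : Type*} [DecidableEq ι]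
    {q : ι → X} {s : Finset ι} (hs : s.Nonempty) (hq : ∀ k ∈ s, 0 ≤ q k)
    {g : X →ₗ[ℝ] ℝ} (hg : ∀ x, 0 ≤ x → 0 ≤ g x) (h0 : g (s.inf' hs q) = 0) :
    ∃ gs : ι → X →ₗ[ℝ] ℝ, (∀ k x, 0 ≤ x → 0 ≤ gs k x) ∧ ∑ k ∈ s, gs k = g ∧
      ∀ k ∈ s, gs k (q k) = 0 := by
  induction hs using Finset.Nonempty.cons_induction generalizing g with
  | singleton a => exact ⟨fun _ ↦ g, fun _ ↦ hg, by simp, by simpa using h0⟩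
  | cons a s ha hs ih =>
    -- Split off the band component of `g` along `r = s.inf' q`: it kills `q a` since
    -- `g (q a ⊓ r) = 0`, and the remainder `g - G` kills `r`, so the induction applies to it.
    rw [inf'_cons hs] at h0
    have hr : 0 ≤ s.inf' hs q := le_inf' hs q fun k hk ↦ hq k (mem_cons_of_mem hk)
    obtain ⟨G, hG, hGg, hGr, hGzero⟩ := exists_bandComponent hg hr
    obtain ⟨gs, hgs, hsum, hzero⟩ := ih (fun k hk ↦ hq k (mem_cons_of_mem hk))
      (g := g - G) (fun x hx ↦ sub_nonneg.2 (hGg x hx)) (by simp [hGr])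
    refine ⟨Function.update gs a G, fun k ↦ ?_, ?_, fun k hk ↦ ?_⟩
    · rcases eq_or_ne k a with rfl | hk
      · simpa using hG
      · simpa [hk] using hgs k
    · rw [sum_cons, Function.update_self, sum_congr rfl fun k hk ↦
        Function.update_of_ne (ne_of_mem_of_not_mem hk ha) _ _, hsum, add_sub_cancel]
    · rcases mem_cons.1 hk with rfl | hk
      · simpa using hGzero _ (hq k (mem_cons_self k s)) h0
      · simpa [ne_of_mem_of_not_mem hk ha] using hzero k hk

theorem decomposition_theorem_if_direction_general {X : Type*} [AddCommGroup X] [Lattice X]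
    [CovariantClass X X (· + ·) (· ≤ ·)] [Module ℝ X]
    (hsmul : ∀ (c : ℝ) (x : X), 0 ≤ c → 0 ≤ x → 0 ≤ c • x)
    {ι : Type*} [Fintype ι] [Nonempty ι]
    (H : ι → Set X)
    (f g : X →ₗ[ℝ] ℝ)
    (hg : ∀ x : X, 0 ≤ x → 0 ≤ g x)
    (hdec : ∀ gs : ι → (X →ₗ[ℝ] ℝ), (∀ k, ∀ x : X, 0 ≤ x → 0 ≤ gs k x) → (∑ k, gs k) = g →
      ∃ fs : ι → (X →ₗ[ℝ] ℝ), (∀ k, ∀ x : X, 0 ≤ x → 0 ≤ fs k x) ∧ (∑ k, fs k) = f ∧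
        ∀ k, ∀ x ∈ H k, gs k x ≤ fs k x) :
    ∀ h : ι → X, (∀ k, h k ∈ H k) →
      g (Finset.univ.sup' Finset.univ_nonempty h) ≤
      f (Finset.univ.sup' Finset.univ_nonempty h) := by
  classical
  have : PosSMulMono ℝ X :=
    ⟨fun c hc x y hxy ↦ by simpa [smul_sub] using hsmul c _ hc (sub_nonneg.2 hxy)⟩
  intro h hH
  set t := univ.sup' univ_nonempty h
  have hle (k : ι) : h k ≤ t := le_sup' h (mem_univ k)
  -- `x ↦ t - x` is an order anti-isomorphism, so it turns the supremum into an infimum.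
  have hinf : univ.inf' univ_nonempty (fun k ↦ t - h k) = 0 :=
    (map_finset_sup' (OrderIso.subLeft t) univ_nonempty h).symm.trans (sub_self t)
  obtain ⟨gs, hgs, rfl, hgs0⟩ := exists_decomposition_of_map_inf'_eq_zero univ_nonempty
    (fun k _ ↦ sub_nonneg.2 (hle k)) hg (by rw [hinf, map_zero])
  obtain ⟨fs, hfs, rfl, hgf⟩ := hdec gs hgs rfl
  simp only [LinearMap.coe_sum, Finset.sum_apply]
  refine sum_le_sum fun k _ ↦ ?_
  calc gs k t = gs k (h k) := by simpa [sub_eq_zero] using hgs0 k (mem_univ k)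
    _ ≤ fs k (h k) := hgf k _ (hH k)
    _ ≤ fs k t := (fs k).map_le_map_of_nonneg (hfs k) (hle k)

theorem decomposition_theorem_if_direction {X : Type*} [AddCommGroup X] [Lattice X]
    [CovariantClass X X (· + ·) (· ≤ ·)] [Module ℝ X]
    (hsmul : ∀ (c : ℝ) (x : X), 0 ≤ c → 0 ≤ x → 0 ≤ c • x)
    {ι : Type*} [Fintype ι] [Nonempty ι]
    (H : ι → Set X) (hH : ∀ k, ∀ c : ℝ, 0 ≤ c → ∀ x ∈ H k, c • x ∈ H k)
    (f g : X →ₗ[ℝ] ℝ)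
    (hf : ∀ x : X, 0 ≤ x → 0 ≤ f x) (hg : ∀ x : X, 0 ≤ x → 0 ≤ g x)
    (hdec : ∀ gs : ι → (X →ₗ[ℝ] ℝ), (∀ k, ∀ x : X, 0 ≤ x → 0 ≤ gs k x) → (∑ k, gs k) = g →
      ∃ fs : ι → (X →ₗ[ℝ] ℝ), (∀ k, ∀ x : X, 0 ≤ x → 0 ≤ fs k x) ∧ (∑ k, fs k) = f ∧
        ∀ k, ∀ x ∈ H k, gs k x ≤ fs k x) :
    ∀ h : ι → X, (∀ k, h k ∈ H k) →
      g (Finset.univ.sup' Finset.univ_nonempty h) ≤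
      f (Finset.univ.sup' Finset.univ_nonempty h) :=
  decomposition_theorem_if_direction_general hsmul H f g hg hdec
end
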